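/- arXiv:2511.11455 — 2 statements merged into one kernel-verified Lean document; each statement's English description precedes it below -/
import Mathlib

section
/- Let (c,b) ∈ ℝ^n × ℝ^m be such that S(c,b) is a singleton {x} and the Slater constraint qualification holds at b. Then S is Hausdorff lower semicontinuous at (c,b): for every ε > 0 there exists δ > 0 such that whenever ‖c̃ − c‖_* < δ and ‖b̃ − b‖_∞ < δ, one has S(c̃,b̃) ≠ ∅ and d(x, S(c̃,b̃)) ≤ ε. -/
/-!
Fix `r > 0`. A feasible point of the sphere `‖z - x‖ = r` is strictly worse than the unique
minimizer `x`, and an infeasible one violates some constraint strictly; both are open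
conditions, so by compactness of the sphere they persist uniformly for data `(c', b')` near
`(c, b)` and for a comparison point `w` near `x`, which Slater's condition lets us take strictly
feasible (hence feasible for all `b'` near `b`). A minimizer of `obj Q c'` over
`F(b') ∩ B̄(x, r)` is no worse than `w`, so it avoids the sphere, and a local minimizer of a
convex function is global. Finally, the dual norm dominates the sup norm, so `‖c' - c‖_*`
small forces `c'` close to `c`.
-/

open Matrix Set Topology Filter
open scoped ENNReal

namespace QPLip

variable {n m : ℕ}

/-- The quadratic objective function `(1/2) xᵀQx + cᵀx`. -/
noncomputable def obj (Q : Matrix (Fin n) (Fin n) ℝ) (c x : Fin n → ℝ) : ℝ :=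
  (1 / 2) * (x ⬝ᵥ Q.mulVec x) + c ⬝ᵥ x

/-- The feasible set `F(b) = {x : aᵢ'x ≤ bᵢ, i = 1,…,m}`. -/
def Feas (A : Matrix (Fin m) (Fin n) ℝ) (b : Fin m → ℝ) : Set (Fin n → ℝ) :=
  {x | ∀ i, A i ⬝ᵥ x ≤ b i}

/-- The argmin (optimal set) mapping `S(c,b)`. -/
noncomputable def argminSet (Q : Matrix (Fin n) (Fin n) ℝ) (A : Matrix (Fin m) (Fin n) ℝ)
    (c : Fin n → ℝ) (b : Fin m → ℝ) : Set (Fin n → ℝ) :=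
  {x | x ∈ Feas A b ∧ ∀ y ∈ Feas A b, obj Q c x ≤ obj Q c y}

/-- The active index set `I_b(x)`. -/
def activeIdx (A : Matrix (Fin m) (Fin n) ℝ) (b : Fin m → ℝ) (x : Fin n → ℝ) : Set (Fin m) :=
  {i | A i ⬝ᵥ x = b i}

/-- Conical convex hull of `{aᵢ : i ∈ D}` (equal to `{0}` when `D = ∅`). -/
def coneOf (A : Matrix (Fin m) (Fin n) ℝ) (D : Finset (Fin m)) : Set (Fin n → ℝ) :=
  {v | ∃ lam : Fin m → ℝ, (∀ i, 0 ≤ lam i) ∧ v = ∑ i ∈ D, lam i • A i}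

/-- The family `M_{c,b}(x)` of minimal KKT sets of indices at `((c,b),x)`. -/
def MinKKT (Q : Matrix (Fin n) (Fin n) ℝ) (A : Matrix (Fin m) (Fin n) ℝ)
    (c : Fin n → ℝ) (b : Fin m → ℝ) (x : Fin n → ℝ) : Set (Finset (Fin m)) :=
  {D | ↑D ⊆ activeIdx A b x ∧ -(Q.mulVec x + c) ∈ coneOf A D ∧
    ∀ D' : Finset (Fin m), D' ⊂ D → -(Q.mulVec x + c) ∉ coneOf A D'}

/-- The extended family `L_{c,b}(x)` of KKT subsets of indices. -/
def ExtKKT (Q : Matrix (Fin n) (Fin n) ℝ) (A : Matrix (Fin m) (Fin n) ℝ)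
    (c : Fin n → ℝ) (b : Fin m → ℝ) (x : Fin n → ℝ) : Set (Finset (Fin m)) :=
  {D | ↑D ⊆ activeIdx A b x ∧ LinearIndependent ℝ (fun i : D => A i.1) ∧
    -(Q.mulVec x + c) ∈ coneOf A D}

/-- Slater constraint qualification at `b`. -/
def Slater (A : Matrix (Fin m) (Fin n) ℝ) (b : Fin m → ℝ) : Prop :=
  ∃ y : Fin n → ℝ, ∀ i, A i ⬝ᵥ y < b i

/-- The Nürnberger condition at `((c,b),x)`. -/
def NCond (Q : Matrix (Fin n) (Fin n) ℝ) (A : Matrix (Fin m) (Fin n) ℝ)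
    (c : Fin n → ℝ) (b : Fin m → ℝ) (x : Fin n → ℝ) : Prop :=
  Slater A b ∧ ∀ D : Finset (Fin m), ↑D ⊆ activeIdx A b x →
    -(Q.mulVec x + c) ∈ coneOf A D → n ≤ D.card

/-- The submatrix `A_D` of `A` formed by the rows indexed by `D`. -/
def subA (A : Matrix (Fin m) (Fin n) ℝ) (D : Finset (Fin m)) : Matrix D (Fin n) ℝ :=
  Matrix.of fun i j => A i.1 j

/-- The KKT matrix `M_D = [[Q, A_Dᵀ],[A_D, 0]]`. -/
noncomputable def MD (Q : Matrix (Fin n) (Fin n) ℝ) (A : Matrix (Fin m) (Fin n) ℝ)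
    (D : Finset (Fin m)) : Matrix (Fin n ⊕ D) (Fin n ⊕ D) ℝ :=
  Matrix.fromBlocks Q (subA A D)ᵀ (subA A D) 0

/-- The feasible set of the subproblem `P_D`. -/
def FeasD (A : Matrix (Fin m) (Fin n) ℝ) (D : Finset (Fin m)) (β : D → ℝ) :
    Set (Fin n → ℝ) :=
  {x | ∀ i : D, A i.1 ⬝ᵥ x ≤ β i}

/-- The optimal set mapping `S_D(c,β)` of the subproblem `P_D(c,β)`. -/
noncomputable def argminD (Q : Matrix (Fin n) (Fin n) ℝ) (A : Matrix (Fin m) (Fin n) ℝ)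
    (D : Finset (Fin m)) (c : Fin n → ℝ) (β : D → ℝ) : Set (Fin n → ℝ) :=
  {x | x ∈ FeasD A D β ∧ ∀ y ∈ FeasD A D β, obj Q c x ≤ obj Q c y}

/-- Restriction `b_D` of the right-hand side `b` to the indices in `D`. -/
def restr (b : Fin m → ℝ) (D : Finset (Fin m)) : D → ℝ := fun i => b i.1

/-- `nrm` is a norm on `ℝⁿ`. -/
structure IsNorm (nrm : (Fin n → ℝ) → ℝ) : Prop where
  definite : ∀ x, nrm x = 0 → x = 0
  smul : ∀ (t : ℝ) (x : Fin n → ℝ), nrm (t • x) = |t| * nrm x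
  triangle : ∀ x y, nrm (x + y) ≤ nrm x + nrm y

/-- The dual norm `‖c‖_* = sup {|c'y| : ‖y‖ ≤ 1}`. -/
noncomputable def dualNrm (nrm : (Fin n → ℝ) → ℝ) (c : Fin n → ℝ) : ℝ :=
  sSup {r | ∃ y, nrm y ≤ 1 ∧ r = |c ⬝ᵥ y|}

/-- Distance (with respect to the norm `nrm`) from a point to a set, with `d(x,∅) = +∞`. -/
noncomputable def dSet (nrm : (Fin n → ℝ) → ℝ) (x : Fin n → ℝ) (S : Set (Fin n → ℝ)) :
    ℝ≥0∞ :=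
  ⨅ s ∈ S, ENNReal.ofReal (nrm (x - s))

/-- The distance `max {‖c₁-c₂‖_*, ‖β₁-β₂‖_∞}` in a parameter space `ℝⁿ × ℝ^ι`. -/
noncomputable def pDist (nrm : (Fin n → ℝ) → ℝ) {ι : Type} [Fintype ι]
    (p q : (Fin n → ℝ) × (ι → ℝ)) : ℝ :=
  max (dualNrm nrm (p.1 - q.1)) ‖p.2 - q.2‖

/-- The Aubin property of a set-valued mapping `G` at `(pbar, xbar)`, where the parameter
space carries the distance `pd` and `ℝⁿ` the norm `nrm`. -/
def AubinAt {P : Type*} [TopologicalSpace P] (nrm : (Fin n → ℝ) → ℝ) (pd : P → P → ℝ)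
    (G : P → Set (Fin n → ℝ)) (pbar : P) (xbar : Fin n → ℝ) : Prop :=
  ∃ κ : ℝ, 0 ≤ κ ∧ ∃ V ∈ 𝓝 pbar, ∃ U ∈ 𝓝 xbar,
    ∀ p1 ∈ V, ∀ p2 ∈ V, ∀ x2 ∈ G p2 ∩ U,
      dSet nrm x2 (G p1) ≤ ENNReal.ofReal (κ * pd p2 p1)

/-- The Lipschitz modulus of `G` at `(pbar, xbar)`: the infimum in `[0,+∞]` of all Lipschitz
constants `κ` in the definition of the Aubin property (`+∞` if the Aubin property fails). -/
noncomputable def lipMod {P : Type*} [TopologicalSpace P] (nrm : (Fin n → ℝ) → ℝ)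
    (pd : P → P → ℝ) (G : P → Set (Fin n → ℝ)) (pbar : P) (xbar : Fin n → ℝ) : ℝ≥0∞ :=
  ⨅ κ ∈ {κ : ℝ | 0 ≤ κ ∧ ∃ V ∈ 𝓝 pbar, ∃ U ∈ 𝓝 xbar,
    ∀ p1 ∈ V, ∀ p2 ∈ V, ∀ x2 ∈ G p2 ∩ U,
      dSet nrm x2 (G p1) ≤ ENNReal.ofReal (κ * pd p2 p1)}, ENNReal.ofReal κ

/-- Strong Lipschitz stability of `G` at `pbar`: single-valuedness in a neighborhood of
`pbar` together with Lipschitz continuity there. -/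
def StrongLipStable {P : Type*} [TopologicalSpace P] (nrm : (Fin n → ℝ) → ℝ)
    (pd : P → P → ℝ) (G : P → Set (Fin n → ℝ)) (pbar : P) : Prop :=
  ∃ V ∈ 𝓝 pbar, (∀ p ∈ V, ∃! x, x ∈ G p) ∧
    ∃ κ : ℝ, 0 ≤ κ ∧ ∀ p1 ∈ V, ∀ p2 ∈ V, ∀ x1 ∈ G p1, ∀ x2 ∈ G p2,
      nrm (x1 - x2) ≤ κ * pd p1 p2

/-- The matrix `(I_n | 0_{n×|D|})`. -/
noncomputable def projMat (n : ℕ) {m : ℕ} (D : Finset (Fin m)) :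
    Matrix (Fin n) (Fin n ⊕ D) ℝ :=
  Matrix.fromCols 1 0

/-- Operator norm of a matrix from `(ℝ^ι, ‖·‖_∞)` to `(ℝⁿ, nrm)`. -/
noncomputable def opNormInf (nrm : (Fin n → ℝ) → ℝ) {ι : Type} [Fintype ι]
    (B : Matrix (Fin n) ι ℝ) : ℝ :=
  sSup {r | ∃ v : ι → ℝ, ‖v‖ ≤ 1 ∧ r = nrm (B.mulVec v)}

/-- Operator norm of a matrix from `(ℝⁿ × ℝ^ι, max {‖·‖_*, ‖·‖_∞})` to `(ℝⁿ, nrm)`. -/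
noncomputable def opNormMixed (nrm : (Fin n → ℝ) → ℝ) {ι : Type} [Fintype ι]
    (B : Matrix (Fin n) (Fin n ⊕ ι) ℝ) : ℝ :=
  sSup {r | ∃ (α : Fin n → ℝ) (β : ι → ℝ), dualNrm nrm α ≤ 1 ∧ ‖β‖ ≤ 1 ∧
    r = nrm (B.mulVec (Sum.elim α β))}


/-- The matrix `A_Dᵀ (A_D A_Dᵀ)⁻¹`, which is the two-sided inverse of `A_D` whenever
`A_D` is square and invertible. -/
noncomputable def pinvA (A : Matrix (Fin m) (Fin n) ℝ) (D : Finset (Fin m)) :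
    Matrix (Fin n) D ℝ :=
  (subA A D)ᵀ * ((subA A D) * (subA A D)ᵀ)⁻¹

end QPLip

open QPLip

namespace QPLip.IsNorm

variable {n : ℕ} {nrm : (Fin n → ℝ) → ℝ}

lemma map_zero (h : IsNorm nrm) : nrm 0 = 0 := by
  simpa using h.smul 0 0

lemma map_neg (h : IsNorm nrm) (x : Fin n → ℝ) : nrm (-x) = nrm x := by
  simpa using h.smul (-1) x

lemma nonneg (h : IsNorm nrm) (x : Fin n → ℝ) : 0 ≤ nrm x := by
  have := h.triangle x (-x)
  rw [add_neg_cancel, h.map_zero, h.map_neg] at this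
  linarith

lemma exists_pos_le_mul_norm (h : IsNorm nrm) : ∃ C > 0, ∀ v, nrm v ≤ C * ‖v‖ := by
  have hsum : 0 ≤ ∑ i, nrm (Pi.single i (1 : ℝ)) := Finset.sum_nonneg fun i _ => h.nonneg _
  refine ⟨∑ i, nrm (Pi.single i 1) + 1, by linarith, fun v => ?_⟩
  calc nrm v = nrm (∑ i, v i • Pi.single i (1 : ℝ)) := by
        congr 1; ext j; simp [Pi.single_apply]
    _ ≤ ∑ i, nrm (v i • Pi.single i (1 : ℝ)) :=
        Finset.le_sum_of_subadditive nrm h.map_zero.le h.triangle _ _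
    _ ≤ ∑ i, ‖v‖ * nrm (Pi.single i 1) := by
        gcongr with i
        rw [h.smul]
        exact mul_le_mul_of_nonneg_right (norm_le_pi_norm v i) (h.nonneg _)
    _ ≤ (∑ i, nrm (Pi.single i 1) + 1) * ‖v‖ := by
        rw [← Finset.mul_sum, mul_comm]; nlinarith [norm_nonneg v]

lemma abs_sub_le (h : IsNorm nrm) (x y : Fin n → ℝ) : |nrm x - nrm y| ≤ nrm (x - y) := by
  have hx := h.triangle (x - y) y
  have hy := h.triangle (y - x) x
  rw [sub_add_cancel] at hx hy
  rw [← neg_sub, h.map_neg] at hy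
  exact abs_sub_le_iff.mpr ⟨by linarith, by linarith⟩

lemma continuous (h : IsNorm nrm) : Continuous nrm := by
  obtain ⟨C, -, hC⟩ := h.exists_pos_le_mul_norm
  refine (LipschitzWith.of_dist_le_mul (K := C.toNNReal) fun x y => ?_).continuous
  rw [Real.dist_eq, dist_eq_norm]
  exact (h.abs_sub_le x y).trans <| (hC _).trans <|
    mul_le_mul_of_nonneg_right (Real.le_coe_toNNReal C) (norm_nonneg _)

lemma exists_pos_mul_norm_le (h : IsNorm nrm) : ∃ μ > 0, ∀ v, μ * ‖v‖ ≤ nrm v := by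
  have hpos : ∀ u ∈ Metric.sphere (0 : Fin n → ℝ) 1, 0 < nrm u := fun u hu =>
    (h.nonneg u).lt_of_ne fun h0 => by simp [h.definite u h0.symm] at hu
  obtain ⟨μ, hμ, hμle⟩ :=
    (isCompact_sphere 0 1).exists_forall_le' h.continuous.continuousOn hpos
  refine ⟨μ, hμ, fun v => ?_⟩
  rcases eq_or_ne v 0 with rfl | hv
  · simp [h.map_zero]
  have hv' : 0 < ‖v‖ := norm_pos_iff.mpr hv
  have hu := hμle (‖v‖⁻¹ • v) (by simp [norm_smul, hv'.ne'])
  rw [h.smul, abs_of_pos (inv_pos.mpr hv'), le_inv_mul_iff₀ hv'] at hu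
  linarith [mul_comm μ ‖v‖]

lemma abs_dotProduct_le_dualNrm_mul (h : IsNorm nrm) (d v : Fin n → ℝ) :
    |d ⬝ᵥ v| ≤ dualNrm nrm d * nrm v := by
  obtain ⟨μ, hμ, hμle⟩ := h.exists_pos_mul_norm_le
  -- without this bound `dualNrm` would be the junk value `sSup` of an unbounded set
  have hbdd : BddAbove {r | ∃ y, nrm y ≤ 1 ∧ r = |d ⬝ᵥ y|} := by
    refine ⟨(∑ i, |d i|) * μ⁻¹, ?_⟩
    rintro _ ⟨y, hy, rfl⟩
    have hy' : ‖y‖ ≤ μ⁻¹ := by rw [← mul_one μ⁻¹, le_inv_mul_iff₀ hμ]; linarith [hμle y]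
    calc |d ⬝ᵥ y| ≤ ∑ i, |d i| * |y i| := by
          simpa only [dotProduct, abs_mul] using
            Finset.abs_sum_le_sum_abs (fun i => d i * y i) Finset.univ
      _ ≤ ∑ i, |d i| * μ⁻¹ := by
          gcongr with i
          exact (norm_le_pi_norm y i).trans hy'
      _ = (∑ i, |d i|) * μ⁻¹ := by rw [Finset.sum_mul]
  rcases (h.nonneg v).eq_or_lt with h0 | hv
  · rw [h.definite v h0.symm, h.map_zero]; simp
  have hunit : nrm ((nrm v)⁻¹ • v) ≤ 1 := by
    rw [h.smul, abs_of_pos (inv_pos.mpr hv), inv_mul_cancel₀ hv.ne']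
  have := le_csSup hbdd ⟨_, hunit, rfl⟩
  rw [dotProduct_smul, smul_eq_mul, abs_mul, abs_of_pos (inv_pos.mpr hv),
    inv_mul_le_iff₀ hv] at this
  exact this.trans_eq (mul_comm _ _)

lemma exists_norm_le_mul_dualNrm (h : IsNorm nrm) :
    ∃ C > 0, ∀ d, ‖d‖ ≤ C * dualNrm nrm d := by
  obtain ⟨C, hC, hCle⟩ := h.exists_pos_le_mul_norm
  refine ⟨C, hC, fun d => ?_⟩
  have hdual : 0 ≤ dualNrm nrm d := Real.sSup_nonneg fun r ⟨_, _, hr⟩ => hr ▸ abs_nonneg _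
  refine (pi_norm_le_iff_of_nonneg (by positivity)).mpr fun j => ?_
  calc ‖d j‖ = |d ⬝ᵥ Pi.single j 1| := by simp [Real.norm_eq_abs]
    _ ≤ dualNrm nrm d * nrm (Pi.single j 1) := h.abs_dotProduct_le_dualNrm_mul _ _
    _ ≤ dualNrm nrm d * C := by
        gcongr
        exact (hCle _).trans_eq (by rw [Pi.norm_single, norm_one, mul_one])
    _ = C * dualNrm nrm d := mul_comm _ _

lemma exists_forall_of_eventually_nhds (h : IsNorm nrm) {m : ℕ} {c : Fin n → ℝ} {b : Fin m → ℝ}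
    {P : (Fin n → ℝ) × (Fin m → ℝ) → Prop} (hP : ∀ᶠ p in 𝓝 (c, b), P p) :
    ∃ δ > 0, ∀ c' b', dualNrm nrm (c' - c) < δ → ‖b' - b‖ < δ → P (c', b') := by
  obtain ⟨ε, hε, hball⟩ := Metric.eventually_nhds_iff_ball.mp hP
  obtain ⟨C, hC, hCle⟩ := h.exists_norm_le_mul_dualNrm
  refine ⟨min ε (ε / C), by positivity, fun c' b' hc hb => hball _ ?_⟩
  have hc' : ‖c' - c‖ < ε := calc
    ‖c' - c‖ ≤ C * dualNrm nrm (c' - c) := hCle _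
    _ < C * (ε / C) := by gcongr; exact hc.trans_le (min_le_right _ _)
    _ = ε := mul_div_cancel₀ ε hC.ne'
  rw [Metric.mem_ball, Prod.dist_eq, dist_eq_norm, dist_eq_norm]
  exact max_lt hc' (hb.trans_le (min_le_left _ _))

end QPLip.IsNorm

namespace QPLip

variable {n m : ℕ}

lemma dotProduct_mulVec_comm {Q : Matrix (Fin n) (Fin n) ℝ} (hQ : Q.IsSymm) (u v : Fin n → ℝ) :
    u ⬝ᵥ Q *ᵥ v = v ⬝ᵥ Q *ᵥ u := by
  rw [dotProduct_mulVec, ← mulVec_transpose, hQ.eq, dotProduct_comm]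

lemma obj_add_smul {Q : Matrix (Fin n) (Fin n) ℝ} (hQ : Q.IsSymm) (c z d : Fin n → ℝ) (t : ℝ) :
    obj Q c (z + t • d) =
      obj Q c z + t * ((Q *ᵥ z + c) ⬝ᵥ d) + t ^ 2 * (1 / 2 * (d ⬝ᵥ Q *ᵥ d)) := by
  simp only [obj, mulVec_add, mulVec_smul, dotProduct_add, add_dotProduct, dotProduct_smul,
    smul_dotProduct, smul_eq_mul]
  rw [dotProduct_mulVec_comm hQ d z, dotProduct_comm (Q *ᵥ z) d, dotProduct_mulVec_comm hQ d z]
  ring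

lemma convexOn_obj {Q : Matrix (Fin n) (Fin n) ℝ} (hQ : Q.PosSemidef) (c : Fin n → ℝ) :
    ConvexOn ℝ univ (obj Q c) := by
  refine ⟨convex_univ, fun x _ y _ a b ha _ hab => ?_⟩
  obtain rfl : b = 1 - a := by linarith
  have hsymm : Q.IsSymm := isHermitian_iff_isSymm.mp hQ.1
  have hq : 0 ≤ (x - y) ⬝ᵥ Q *ᵥ (x - y) := by simpa using hQ.dotProduct_mulVec_nonneg (x - y)
  have hx := obj_add_smul hsymm c y (x - y) 1
  rw [one_smul, add_sub_cancel] at hx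
  have hcomb : a • x + (1 - a) • y = y + a • (x - y) := by
    rw [sub_smul, one_smul, smul_sub]; abel
  rw [hcomb, obj_add_smul hsymm, hx, smul_eq_mul, smul_eq_mul]
  have ha2 : a ^ 2 ≤ a := by nlinarith
  nlinarith [mul_le_mul_of_nonneg_right ha2 hq]

@[fun_prop]
lemma continuous_obj {X : Type*} [TopologicalSpace X] (Q : Matrix (Fin n) (Fin n) ℝ)
    {f g : X → Fin n → ℝ} (hf : Continuous f) (hg : Continuous g) :
    Continuous fun u => obj Q (f u) (g u) := by
  simp only [obj, dotProduct, mulVec]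
  fun_prop

lemma convex_feas (A : Matrix (Fin m) (Fin n) ℝ) (b : Fin m → ℝ) : Convex ℝ (Feas A b) := by
  simp only [Feas, ofPred_forall]
  exact convex_iInter fun i =>
    convex_halfSpace_le ⟨dotProduct_add (A i), fun t v => dotProduct_smul t (A i) v⟩ _

lemma isClosed_feas (A : Matrix (Fin m) (Fin n) ℝ) (b : Fin m → ℝ) : IsClosed (Feas A b) := by
  simp only [Feas, ofPred_forall]
  exact isClosed_iInter fun i =>
    isClosed_le (continuous_const.dotProduct continuous_id) continuous_const

section Argmin

variable {Q : Matrix (Fin n) (Fin n) ℝ} {A : Matrix (Fin m) (Fin n) ℝ} {c : Fin n → ℝ}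
  {b : Fin m → ℝ} {x : Fin n → ℝ}

lemma mem_argminSet_of_isMinOn_closedBall (hQ : Q.PosSemidef) {z : Fin n → ℝ} {r : ℝ}
    (hz : z ∈ Feas A b) (hzr : dist z x < r)
    (hmin : IsMinOn (obj Q c) (Feas A b ∩ Metric.closedBall x r) z) :
    z ∈ argminSet Q A c b := by
  have hball : Metric.closedBall x r ∈ 𝓝 z :=
    mem_of_superset (Metric.isOpen_ball.mem_nhds hzr) Metric.ball_subset_closedBall
  have hloc : IsLocalMinOn (obj Q c) (Feas A b) z :=
    mem_of_superset (inter_mem_nhdsWithin _ hball) hmin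
  exact ⟨hz, IsMinOn.of_isLocalMinOn_of_convexOn hz hloc
    ((convexOn_obj hQ c).subset (subset_univ _) (convex_feas A b))⟩

lemma exists_mem_argminSet_dist_lt (hQ : Q.PosSemidef) {w : Fin n → ℝ} {r : ℝ}
    (hw : w ∈ Feas A b) (hwx : dist w x ≤ r)
    (hsphere : ∀ z ∈ Metric.sphere x r, z ∈ Feas A b → obj Q c w < obj Q c z) :
    ∃ z ∈ argminSet Q A c b, dist z x < r := by
  have hK : IsCompact (Feas A b ∩ Metric.closedBall x r) :=
    (isCompact_closedBall x r).inter_left (isClosed_feas A b)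
  obtain ⟨z, ⟨hzF, hzB⟩, hmin⟩ := hK.exists_isMinOn ⟨w, hw, hwx⟩
    (by fun_prop : Continuous (obj Q c)).continuousOn
  have hzr : dist z x < r := (Metric.mem_closedBall.mp hzB).lt_of_ne fun h =>
    (hsphere z h hzF).not_ge (hmin ⟨hw, hwx⟩)
  exact ⟨z, mem_argminSet_of_isMinOn_closedBall hQ hzF hzr hmin, hzr⟩

lemma mem_closure_strictFeas (hx : x ∈ Feas A b) (hSl : Slater A b) :
    x ∈ closure {w | ∀ i, A i ⬝ᵥ w < b i} := by
  obtain ⟨y, hy⟩ := hSl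
  have hlim : Tendsto (fun s : ℝ => x + s • (y - x)) (𝓝[>] 0) (𝓝 x) := by
    have hcont : Continuous fun s : ℝ => x + s • (y - x) := by fun_prop
    simpa using (hcont.tendsto 0).mono_left nhdsWithin_le_nhds
  refine mem_closure_of_tendsto hlim ?_
  filter_upwards [Ioc_mem_nhdsGT one_pos] with s ⟨hs0, hs1⟩ i
  have hsplit : A i ⬝ᵥ (x + s • (y - x)) = (1 - s) * A i ⬝ᵥ x + s * A i ⬝ᵥ y := by
    simp only [dotProduct_add, dotProduct_smul, dotProduct_sub, smul_eq_mul]; ring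
  rw [hsplit]
  nlinarith [hx i, hy i]

lemma eventually_forall_sphere (hsingle : argminSet Q A c b = {x}) {r : ℝ} (hr : 0 < r) :
    ∀ᶠ q : ((Fin n → ℝ) × (Fin m → ℝ)) × (Fin n → ℝ) in 𝓝 ((c, b), x),
      ∀ z ∈ Metric.sphere x r, z ∉ Feas A q.1.2 ∨ obj Q q.1.1 q.2 < obj Q q.1.1 z := by
  refine (isCompact_sphere x r).eventually_forall_of_forall_eventually fun z hz => ?_
  by_cases hzF : z ∈ Feas A b
  · have hlt : obj Q c x < obj Q c z := by
      by_contra! hle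
      have hz' : z ∈ argminSet Q A c b :=
        ⟨hzF, fun w hw => hle.trans ((hsingle ▸ rfl : x ∈ argminSet Q A c b).2 w hw)⟩
      rw [hsingle, mem_singleton_iff] at hz'
      rw [Metric.mem_sphere, hz', dist_self] at hz
      exact hr.ne hz
    refine Eventually.mono ?_ fun u hu => Or.inr hu
    exact (Continuous.tendsto (by fun_prop) _).eventually_lt
      (Continuous.tendsto (by fun_prop) _) hlt
  · obtain ⟨i, hi⟩ : ∃ i, b i < A i ⬝ᵥ z := by simpa [Feas] using hzF
    refine Eventually.mono ?_ fun u hu => Or.inl fun hF => (hF i).not_gt hu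
    exact (Continuous.tendsto (by fun_prop) _).eventually_lt
      ((continuous_const.dotProduct continuous_snd).tendsto _) hi

theorem eventually_exists_mem_argminSet_dist_lt (hQ : Q.PosSemidef)
    (hsingle : argminSet Q A c b = {x}) (hSl : Slater A b) {r : ℝ} (hr : 0 < r) :
    ∀ᶠ p in 𝓝 (c, b), ∃ z ∈ argminSet Q A p.1 p.2, dist z x < r := by
  have hx : x ∈ Feas A b := (hsingle ▸ rfl : x ∈ argminSet Q A c b).1
  have hsphere := eventually_forall_sphere (Q := Q) hsingle hr
  rw [nhds_prod_eq] at hsphere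
  obtain ⟨Pp, hPp, Pw, hPw, hP⟩ := eventually_prod_iff.mp hsphere
  obtain ⟨w, ⟨hPw', hwx⟩, hw⟩ := mem_closure_iff_nhds.mp (mem_closure_strictFeas hx hSl) _
    (inter_mem hPw (Metric.ball_mem_nhds x hr))
  have hwF : ∀ᶠ p in 𝓝 (c, b), ∀ i, A i ⬝ᵥ w < p.2 i := eventually_all.mpr fun i =>
    ((continuous_apply i).comp continuous_snd).tendsto (c, b) |>.eventually_const_lt (hw i)
  filter_upwards [hPp, hwF] with p hp hpw
  exact exists_mem_argminSet_dist_lt hQ (fun i => (hpw i).le) (Metric.mem_ball.mp hwx).le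
    fun z hz hzF => (hP hp hPw' z hz).resolve_left (not_not_intro hzF)

end Argmin

end QPLip

theorem statement15_general {n m : ℕ}
    (nrm : (Fin n → ℝ) → ℝ) (hnrm : IsNorm nrm)
    (Q : Matrix (Fin n) (Fin n) ℝ) (hQ : Q.PosSemidef)
    (A : Matrix (Fin m) (Fin n) ℝ) (c : Fin n → ℝ) (b : Fin m → ℝ) (x : Fin n → ℝ)
    (hsingle : argminSet Q A c b = {x}) (hSl : Slater A b) :
    ∀ ε > (0 : ℝ), ∃ δ > (0 : ℝ), ∀ (c' : Fin n → ℝ) (b' : Fin m → ℝ),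
      dualNrm nrm (c' - c) < δ → ‖b' - b‖ < δ →
        (argminSet Q A c' b').Nonempty ∧
        dSet nrm x (argminSet Q A c' b') ≤ ENNReal.ofReal ε := by
  intro ε hε
  obtain ⟨C, hC, hCle⟩ := hnrm.exists_pos_le_mul_norm
  obtain ⟨δ, hδ, hnear⟩ := hnrm.exists_forall_of_eventually_nhds
    (eventually_exists_mem_argminSet_dist_lt hQ hsingle hSl (div_pos hε hC))
  refine ⟨δ, hδ, fun c' b' hc hb => ?_⟩
  obtain ⟨z, hz, hzx⟩ := hnear c' b' hc hb
  refine ⟨⟨z, hz⟩, (iInf₂_le z hz).trans (ENNReal.ofReal_le_ofReal ?_)⟩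
  calc nrm (x - z) ≤ C * ‖x - z‖ := hCle _
    _ ≤ C * (ε / C) := by rw [← dist_eq_norm, dist_comm]; gcongr
    _ = ε := mul_div_cancel₀ ε hC.ne'

/-- if `S(c,b) = {x}` and SCQ holds at `b`, then `S` is Hausdorff lower
semicontinuous at `(c,b)`. -/
theorem statement15 {n m : ℕ} (hn : 0 < n) (hm : 0 < m)
    (nrm : (Fin n → ℝ) → ℝ) (hnrm : IsNorm nrm)
    (Q : Matrix (Fin n) (Fin n) ℝ) (hQ : Q.PosSemidef)
    (A : Matrix (Fin m) (Fin n) ℝ) (c : Fin n → ℝ) (b : Fin m → ℝ) (x : Fin n → ℝ)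
    (hsingle : argminSet Q A c b = {x}) (hSl : Slater A b) :
    ∀ ε > (0 : ℝ), ∃ δ > (0 : ℝ), ∀ (c' : Fin n → ℝ) (b' : Fin m → ℝ),
      dualNrm nrm (c' - c) < δ → ‖b' - b‖ < δ →
        (argminSet Q A c' b').Nonempty ∧
        dSet nrm x (argminSet Q A c' b') ≤ ENNReal.ofReal ε :=
  statement15_general nrm hnrm Q hQ A c b x hsingle hSl
end

section
/- Equip ℝ^n with the Euclidean norm ‖·‖_2 and the parameter space ℝ^n × ℝ^m with the norm ‖(z,b)‖ = max{‖z‖_2, ‖b‖_∞}. Assume the Slater constraint qualification holds at b̄ and let x̄ = P(z̄,b̄) be the Euclidean projection of z̄ on F(b̄). Then the metric projection mapping P has the Aubin property at ((z̄,b̄),x̄), for every D ∈ L_{z̄,b̄}(x̄) the matrix A_D A_D' is invertible, and lip P((z̄,b̄),x̄) = max over D ∈ L_{z̄,b̄}(x̄) of ‖( I_n − A_D'(A_D A_D')^{−1}A_D | A_D'(A_D A_D')^{−1} )‖, where L_{z̄,b̄}(x̄) := {D ⊂ I_{b̄}(x̄) : {a_i : i ∈ D} is linearly independent and z̄ − x̄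 ∈ cone{a_i : i ∈ D}}, and each norm is the operator norm of the indicated partitioned n×(n+|D|) matrix from (ℝ^n × ℝ^D, max{‖·‖_2, ‖·‖_∞}) to (ℝ^n, ‖·‖_2). -/
open Matrix Set Topology Filter
open scoped ENNReal

open QPLip


/-- The Euclidean norm on `ℝⁿ`. -/
noncomputable def eucNorm {n : ℕ} (x : Fin n → ℝ) : ℝ := Real.sqrt (x ⬝ᵥ x)

/-- The metric projection mapping: `P(z,b)` is the set of points of `F(b)` closest to `z`
in the Euclidean norm. -/
noncomputable def projSet {n m : ℕ} (A : Matrix (Fin m) (Fin n) ℝ)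
    (z : Fin n → ℝ) (b : Fin m → ℝ) : Set (Fin n → ℝ) :=
  {x | x ∈ Feas A b ∧ ∀ y ∈ Feas A b, eucNorm (z - x) ≤ eucNorm (z - y)}

/-- The distance `max {‖z₁-z₂‖₂, ‖b₁-b₂‖_∞}` on the parameter space `ℝⁿ × ℝᵐ`. -/
noncomputable def pDistE {n m : ℕ} (p q : (Fin n → ℝ) × (Fin m → ℝ)) : ℝ :=
  max (eucNorm (p.1 - q.1)) ‖p.2 - q.2‖

/-- Operator norm of a matrix from `(ℝⁿ × ℝ^ι, max {‖·‖₂, ‖·‖_∞})` to `(ℝⁿ, ‖·‖₂)`. -/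
noncomputable def opNormE {n : ℕ} {ι : Type} [Fintype ι]
    (B : Matrix (Fin n) (Fin n ⊕ ι) ℝ) : ℝ :=
  sSup {r | ∃ (α : Fin n → ℝ) (β : ι → ℝ), eucNorm α ≤ 1 ∧ ‖β‖ ≤ 1 ∧
    r = eucNorm (B.mulVec (Sum.elim α β))}

/-- The family `L_{z̄,b̄}(x̄)` for the metric projection. -/
def LprojKKT {n m : ℕ} (A : Matrix (Fin m) (Fin n) ℝ)
    (z : Fin n → ℝ) (b : Fin m → ℝ) (x : Fin n → ℝ) : Set (Finset (Fin m)) :=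
  {D | ↑D ⊆ activeIdx A b x ∧ LinearIndependent ℝ (fun i : D => A i.1) ∧
    (z - x) ∈ coneOf A D}

/-- The partitioned matrix `(I_n − A_Dᵀ(A_D A_Dᵀ)⁻¹A_D | A_Dᵀ(A_D A_Dᵀ)⁻¹)`. -/
noncomputable def projLipMat {n m : ℕ} (A : Matrix (Fin m) (Fin n) ℝ)
    (D : Finset (Fin m)) : Matrix (Fin n) (Fin n ⊕ D) ℝ :=
  Matrix.fromCols (1 - (subA A D)ᵀ * ((subA A D) * (subA A D)ᵀ)⁻¹ * subA A D)
    ((subA A D)ᵀ * ((subA A D) * (subA A D)ᵀ)⁻¹)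

/-!
Near `(z̄, b̄)` the feasible sets are nonempty by Slater's condition, and at the projection the
KKT conditions hold with a linearly independent set `D` of active rows. The parameters for which
a fixed `D` is such a KKT set form a closed region on which the projection is the linear map
`(z, b) ↦ (I − A_D'(A_D A_D')⁻¹A_D) z + A_D'(A_D A_D')⁻¹ b_D`; since `(z̄, b̄)` lies in this region
exactly when `D ∈ L_{z̄,b̄}(x̄)`, only these `D` occur near `(z̄, b̄)`. So `P` is piecewise linear
there, and following a segment through the pieces bounds its Lipschitz constant by the largest
norm of the matrices. Conversely, for `D ∈ L_{z̄,b̄}(x̄)` one can move `(z̄, b̄)` slightly so that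
`P` keeps the value `x̄` while all KKT inequalities for `D` become strict; around the new point
`P` equals the linear map of `D`, so every Lipschitz constant dominates the norm of its matrix.
-/

namespace MetricProjection

variable {n m : ℕ} {A : Matrix (Fin m) (Fin n) ℝ}

section Euclidean

lemma eucNorm_eq_norm (x : Fin n → ℝ) : eucNorm x = ‖WithLp.toLp 2 x‖ := by
  simp [eucNorm, EuclideanSpace.norm_eq, dotProduct, sq]

lemma dotProduct_eq_inner (x y : Fin n → ℝ) :
    x ⬝ᵥ y = inner ℝ (WithLp.toLp 2 x) (WithLp.toLp 2 y) := by
  simp [EuclideanSpace.inner_eq_star_dotProduct, dotProduct_comm]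

lemma eucNorm_nonneg (x : Fin n → ℝ) : 0 ≤ eucNorm x := Real.sqrt_nonneg _

lemma eucNorm_smul (t : ℝ) (x : Fin n → ℝ) : eucNorm (t • x) = |t| * eucNorm x := by
  simp [eucNorm_eq_norm, norm_smul]

lemma abs_le_eucNorm (x : Fin n → ℝ) (i : Fin n) : |x i| ≤ eucNorm x := by
  simpa [eucNorm_eq_norm] using PiLp.norm_apply_le (WithLp.toLp 2 x) i

lemma continuous_eucNorm : Continuous (eucNorm : (Fin n → ℝ) → ℝ) := by
  simp only [funext eucNorm_eq_norm]
  fun_prop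

lemma forall_norm_sub_le_iff_inner_le_zero {F : Type*} [NormedAddCommGroup F]
    [InnerProductSpace ℝ F] {K : Set F} (hK : Convex ℝ K) {u v : F} (hv : v ∈ K) :
    (∀ w ∈ K, ‖u - v‖ ≤ ‖u - w‖) ↔ ∀ w ∈ K, inner ℝ (u - v) (w - v) ≤ 0 := by
  have : Nonempty K := ⟨⟨v, hv⟩⟩
  have hbdd : BddBelow (range fun w : K => ‖u - w‖) :=
    ⟨0, forall_mem_range.2 fun _ => norm_nonneg _⟩
  rw [← norm_eq_iInf_iff_real_inner_le_zero hK hv]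
  exact ⟨fun h => le_antisymm (le_ciInf fun w => h w w.2) (ciInf_le hbdd ⟨v, hv⟩),
    fun h w hw => h ▸ ciInf_le hbdd ⟨w, hw⟩⟩

lemma forall_eucNorm_sub_le_iff {S : Set (Fin n → ℝ)} (hS : Convex ℝ S) {z x : Fin n → ℝ}
    (hx : x ∈ S) :
    (∀ y ∈ S, eucNorm (z - x) ≤ eucNorm (z - y)) ↔ ∀ y ∈ S, (z - x) ⬝ᵥ (y - x) ≤ 0 := by
  have hK : Convex ℝ (WithLp.toLp 2 '' S) :=
    hS.linear_image (WithLp.linearEquiv 2 ℝ (Fin n → ℝ)).symm.toLinearMap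
  have := forall_norm_sub_le_iff_inner_le_zero hK (u := WithLp.toLp 2 z) (mem_image_of_mem _ hx)
  simpa only [forall_mem_image, ← WithLp.toLp_sub, ← eucNorm_eq_norm, ← dotProduct_eq_inner]
    using this

lemma exists_forall_eucNorm_sub_le {S : Set (Fin n → ℝ)} (hne : S.Nonempty) (hS : IsClosed S)
    (hconv : Convex ℝ S) (z : Fin n → ℝ) :
    ∃ x ∈ S, ∀ y ∈ S, eucNorm (z - x) ≤ eucNorm (z - y) := by
  set K : Set (EuclideanSpace ℝ (Fin n)) := WithLp.ofLp ⁻¹' S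
  have hK : Convex ℝ K := hconv.linear_preimage (WithLp.linearEquiv 2 ℝ (Fin n → ℝ)).toLinearMap
  obtain ⟨x, hx⟩ := hne
  obtain ⟨v, hv, hmin⟩ := exists_norm_eq_iInf_of_complete_convex (u := WithLp.toLp 2 z)
    ⟨WithLp.toLp 2 x, hx⟩ (hS.preimage (PiLp.continuous_ofLp 2 _)).isComplete hK
  refine ⟨v.ofLp, hv, fun y hy => ?_⟩
  rw [eucNorm_eq_norm, eucNorm_eq_norm, WithLp.toLp_sub, WithLp.toLp_ofLp, hmin,
    WithLp.toLp_sub]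
  exact ciInf_le ⟨0, forall_mem_range.2 fun _ => norm_nonneg _⟩ (⟨WithLp.toLp 2 y, hy⟩ : K)

end Euclidean

section Polyhedron

lemma isClosed_feas (A : Matrix (Fin m) (Fin n) ℝ) (b : Fin m → ℝ) : IsClosed (Feas A b) := by
  simp only [Feas, ofPred_forall]
  exact isClosed_iInter fun i => isClosed_le (by fun_prop) continuous_const

lemma convex_feas (A : Matrix (Fin m) (Fin n) ℝ) (b : Fin m → ℝ) : Convex ℝ (Feas A b) := by
  simp only [Feas, ofPred_forall]
  exact convex_iInter fun i => convex_halfSpace_le (dotProductBilin ℝ ℝ (A i)).isLinear _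

lemma mem_projSet_iff {z x : Fin n → ℝ} {b : Fin m → ℝ} :
    x ∈ projSet A z b ↔ x ∈ Feas A b ∧ ∀ y ∈ Feas A b, (z - x) ⬝ᵥ (y - x) ≤ 0 :=
  and_congr_right fun hx => forall_eucNorm_sub_le_iff (convex_feas A b) hx

lemma eq_of_mem_projSet {z : Fin n → ℝ} {b : Fin m → ℝ} {x y : Fin n → ℝ}
    (hx : x ∈ projSet A z b) (hy : y ∈ projSet A z b) : x = y := by
  have h1 := (mem_projSet_iff.1 hx).2 y hy.1
  have h2 := (mem_projSet_iff.1 hy).2 x hx.1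
  have : (x - y) ⬝ᵥ (x - y) = (z - x) ⬝ᵥ (y - x) + (z - y) ⬝ᵥ (x - y) := by
    simp only [sub_dotProduct, dotProduct_sub, dotProduct_comm y x]
    ring
  exact sub_eq_zero.1 (dotProduct_self_eq_zero.1
    (le_antisymm (this ▸ add_nonpos h1 h2) (dotProduct_self_star_nonneg _)))

lemma projSet_nonempty {z : Fin n → ℝ} {b : Fin m → ℝ} (hb : (Feas A b).Nonempty) :
    (projSet A z b).Nonempty :=
  exists_forall_eucNorm_sub_le hb (isClosed_feas A b) (convex_feas A b) z

end Polyhedron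

section Cone

variable {D : Finset (Fin m)}

lemma mem_coneOf_of_nonneg {v : Fin n → ℝ} (lam : Fin m → ℝ) (hlam : ∀ i ∈ D, 0 ≤ lam i)
    (hv : v = ∑ i ∈ D, lam i • A i) : v ∈ coneOf A D :=
  ⟨fun i => max (lam i) 0, fun _ => le_max_right _ _,
    hv.trans (Finset.sum_congr rfl fun i hi => by simp only [max_eq_left (hlam i hi)])⟩

lemma subA_transpose_mulVec (μ : D → ℝ) : (subA A D)ᵀ *ᵥ μ = ∑ i : D, μ i • A i := by
  ext j
  simp [mulVec, dotProduct, subA, mul_comm]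

lemma mem_coneOf_iff {v : Fin n → ℝ} :
    v ∈ coneOf A D ↔ ∃ μ : D → ℝ, 0 ≤ μ ∧ v = (subA A D)ᵀ *ᵥ μ := by
  simp only [subA_transpose_mulVec]
  constructor
  · rintro ⟨lam, hlam, rfl⟩
    exact ⟨fun i => lam i, fun i => hlam i, (Finset.sum_coe_sort D _).symm⟩
  · rintro ⟨μ, hμ, rfl⟩
    refine mem_coneOf_of_nonneg (fun i => if h : i ∈ D then μ ⟨i, h⟩ else 0)
      (fun i hi => by simpa [hi] using hμ ⟨i, hi⟩) ?_
    rw [← Finset.sum_coe_sort D]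
    exact Finset.sum_congr rfl fun i _ => by simp

lemma zero_mem_coneOf : (0 : Fin n → ℝ) ∈ coneOf A D :=
  ⟨0, fun _ => le_rfl, by simp⟩

lemma add_mem_coneOf {u v : Fin n → ℝ} (hu : u ∈ coneOf A D) (hv : v ∈ coneOf A D) :
    u + v ∈ coneOf A D := by
  obtain ⟨l₁, hl₁, rfl⟩ := hu
  obtain ⟨l₂, hl₂, rfl⟩ := hv
  exact ⟨l₁ + l₂, fun i => add_nonneg (hl₁ i) (hl₂ i), by
    simp only [Pi.add_apply, add_smul, Finset.sum_add_distrib]⟩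

lemma smul_mem_coneOf {v : Fin n → ℝ} {t : ℝ} (ht : 0 ≤ t) (hv : v ∈ coneOf A D) :
    t • v ∈ coneOf A D := by
  obtain ⟨l, hl, rfl⟩ := hv
  exact ⟨t • l, fun i => mul_nonneg ht (hl i), by simp [Finset.smul_sum, smul_smul]⟩

lemma row_mem_coneOf {i : Fin m} (hi : i ∈ D) : A i ∈ coneOf A D := by
  refine mem_coneOf_of_nonneg (Pi.single i 1) (fun j _ => ?_) ?_
  · by_cases h : j = i <;> simp [h]
  · rw [Finset.sum_eq_single_of_mem i hi fun j _ hj => by simp [hj]]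
    simp

lemma convex_coneOf : Convex ℝ (coneOf A D) := fun _ hu _ hv _ _ ha hb _ =>
  add_mem_coneOf (smul_mem_coneOf ha hu) (smul_mem_coneOf hb hv)

lemma coneOf_mono {D' : Finset (Fin m)} (h : D ⊆ D') : coneOf A D ⊆ coneOf A D' := by
  rintro v ⟨lam, hlam, rfl⟩
  refine mem_coneOf_of_nonneg (fun i => if i ∈ D then lam i else 0) (fun i _ => ?_) ?_
  · split_ifs <;> simp [hlam i]
  · rw [← Finset.sum_subset h fun i _ hi => by simp [hi]]
    exact Finset.sum_congr rfl fun i hi => by simp [hi]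

/-- The reduction step of the conical Carathéodory theorem: along a linear dependence among the
generators, the coefficients can be moved until one of them vanishes. -/
lemma exists_mem_coneOf_erase {v : Fin n → ℝ} (hv : v ∈ coneOf A D)
    (hD : ¬LinearIndependent ℝ (fun i : D => A i.1)) : ∃ i ∈ D, v ∈ coneOf A (D.erase i) := by
  obtain ⟨lam, hlam, rfl⟩ := hv
  obtain ⟨g, hg, i₁, hi₁, hgi₁⟩ := not_linearIndepOn_finset_iff.1 hD
  wlog hpos : 0 < g i₁ generalizing g
  · exact this (-g) (by simp [neg_smul, Finset.sum_neg_distrib, hg]) (neg_ne_zero.2 hgi₁)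
      (neg_pos.2 (lt_of_le_of_ne (not_lt.1 hpos) hgi₁))
  obtain ⟨i₀, hi₀, hmin⟩ := (D.filter fun i => 0 < g i).exists_min_image (fun i => lam i / g i)
    ⟨i₁, Finset.mem_filter.2 ⟨hi₁, hpos⟩⟩
  obtain ⟨hi₀D, hgi₀⟩ := Finset.mem_filter.1 hi₀
  set t := lam i₀ / g i₀
  have ht : 0 ≤ t := div_nonneg (hlam i₀) hgi₀.le
  refine ⟨i₀, hi₀D, mem_coneOf_of_nonneg (lam - t • g) (fun i hi => ?_) ?_⟩
  · have hiD := Finset.mem_of_mem_erase hi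
    simp only [Pi.sub_apply, Pi.smul_apply, smul_eq_mul, sub_nonneg]
    by_cases hgi : 0 < g i
    · exact (le_div_iff₀ hgi).1 (hmin i (Finset.mem_filter.2 ⟨hiD, hgi⟩))
    · exact (mul_nonpos_of_nonneg_of_nonpos ht (not_lt.1 hgi)).trans (hlam i)
  · have hzero : (lam - t • g) i₀ • A i₀ = 0 := by
      simp [t, div_mul_cancel₀ _ hgi₀.ne']
    rw [Finset.sum_erase D (f := fun i => (lam - t • g) i • A i) hzero]
    simp [sub_smul, Finset.sum_sub_distrib, mul_smul, ← Finset.smul_sum, hg]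

lemma exists_linearIndependent_of_mem_coneOf {v : Fin n → ℝ} (hv : v ∈ coneOf A D) :
    ∃ E ⊆ D, LinearIndependent ℝ (fun i : E => A i.1) ∧ v ∈ coneOf A E := by
  induction D using Finset.strongInduction with
  | H D ih =>
    by_cases hli : LinearIndependent ℝ (fun i : D => A i.1)
    · exact ⟨D, subset_rfl, hli, hv⟩
    obtain ⟨i, hi, hvi⟩ := exists_mem_coneOf_erase hv hli
    obtain ⟨E, hE, hEli, hvE⟩ := ih _ (Finset.erase_ssubset hi) hvi
    exact ⟨E, hE.trans (Finset.erase_subset _ _), hEli, hvE⟩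

lemma isClosed_coneOf_of_linearIndependent (hli : LinearIndependent ℝ (fun i : D => A i.1)) :
    IsClosed (coneOf A D) := by
  have hinj : Function.Injective (subA A D)ᵀ.mulVecLin := by
    simpa [Function.Injective, mulVec_transpose] using (vecMul_injective_iff (M := subA A D)).2 hli
  have : coneOf A D = (subA A D)ᵀ.mulVecLin '' Ici 0 := by
    ext v
    simp only [mem_coneOf_iff, mem_image, mem_Ici, mulVecLin_apply, eq_comm]
  rw [this]
  exact (LinearMap.isClosedEmbedding_of_injective (LinearMap.ker_eq_bot.2 hinj)).isClosedMap _
    isClosed_Ici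

lemma isClosed_coneOf (A : Matrix (Fin m) (Fin n) ℝ) (D : Finset (Fin m)) :
    IsClosed (coneOf A D) := by
  classical
  have : coneOf A D = ⋃ E ∈ D.powerset.filter
      (fun E : Finset (Fin m) => LinearIndependent ℝ (fun i : E => A i.1)), coneOf A E := by
    ext v
    simp only [mem_iUnion, Finset.mem_filter, Finset.mem_powerset, exists_prop]
    refine ⟨fun hv => ?_, fun ⟨E, ⟨hE, _⟩, hvE⟩ => coneOf_mono hE hvE⟩
    obtain ⟨E, hE, hli, hvE⟩ := exists_linearIndependent_of_mem_coneOf hv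
    exact ⟨E, ⟨hE, hli⟩, hvE⟩
  rw [this]
  exact isClosed_biUnion_finset fun E hE =>
    isClosed_coneOf_of_linearIndependent (Finset.mem_filter.1 hE).2

/-- Farkas' lemma. -/
lemma mem_coneOf_of_forall_dotProduct_nonpos {c : Fin n → ℝ}
    (h : ∀ d : Fin n → ℝ, (∀ i ∈ D, A i ⬝ᵥ d ≤ 0) → c ⬝ᵥ d ≤ 0) : c ∈ coneOf A D := by
  obtain ⟨p, hp, hmin⟩ := exists_forall_eucNorm_sub_le ⟨0, zero_mem_coneOf⟩
    (isClosed_coneOf A D) convex_coneOf c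
  have hVI := (forall_eucNorm_sub_le_iff convex_coneOf hp).1 hmin
  -- testing the variational inequality at `0`, `2 • p` and `p + A i` shows that the residual
  -- `c - p` is orthogonal to `p` and satisfies the hypothesis of `h`
  have horth : (c - p) ⬝ᵥ p = 0 := by
    have h0 := hVI 0 zero_mem_coneOf
    have h2 := hVI ((2 : ℝ) • p) (smul_mem_coneOf zero_le_two hp)
    rw [zero_sub, dotProduct_neg] at h0
    rw [two_smul, add_sub_cancel_right] at h2
    linarith
  have hc := h (c - p) fun i hi => by
    simpa [dotProduct_comm] using hVI (p + A i) (add_mem_coneOf hp (row_mem_coneOf hi))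
  have : (c - p) ⬝ᵥ (c - p) ≤ 0 := by
    rwa [dotProduct_sub, horth, sub_zero, dotProduct_comm]
  rwa [sub_eq_zero.1 (dotProduct_self_eq_zero.1 (le_antisymm this
    (dotProduct_self_star_nonneg _)))]

end Cone

lemma eventually_add_smul_mem {E : Type*} [AddCommGroup E] [TopologicalSpace E]
    [IsTopologicalAddGroup E] [Module ℝ E] [ContinuousSMul ℝ E] {S : Set E} {p : E}
    (hS : S ∈ 𝓝 p) (q : E) : ∀ᶠ t in 𝓝[>] (0 : ℝ), p + t • q ∈ S :=
  eventually_nhdsWithin_of_eventually_nhds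
    (((continuous_const.add (continuous_id.smul continuous_const)).tendsto' 0 p
      (by simp)).eventually hS)

section KKT

variable {z x : Fin n → ℝ} {b : Fin m → ℝ}

lemma mem_projSet_of_kkt {D : Finset (Fin m)} (hx : x ∈ Feas A b)
    (hact : ↑D ⊆ activeIdx A b x) (hcone : z - x ∈ coneOf A D) : x ∈ projSet A z b := by
  refine mem_projSet_iff.2 ⟨hx, fun y hy => ?_⟩
  obtain ⟨lam, hlam, hzx⟩ := hcone
  rw [hzx, sum_dotProduct]
  refine Finset.sum_nonpos fun i hi => ?_
  have hi' : A i ⬝ᵥ x = b i := hact hi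
  rw [smul_dotProduct, smul_eq_mul, dotProduct_sub, hi']
  exact mul_nonpos_of_nonneg_of_nonpos (hlam i) (sub_nonpos.2 (hy i))

lemma eventually_add_smul_mem_feas {d : Fin n → ℝ} (hx : x ∈ Feas A b)
    (hd : ∀ i ∈ activeIdx A b x, A i ⬝ᵥ d ≤ 0) :
    ∀ᶠ t in 𝓝[>] (0 : ℝ), x + t • d ∈ Feas A b := by
  simp only [Feas, mem_ofPred_eq, eventually_all]
  intro i
  by_cases hi : A i ⬝ᵥ x = b i
  · filter_upwards [self_mem_nhdsWithin] with t (ht : 0 < t)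
    rw [dotProduct_add, dotProduct_smul, smul_eq_mul, hi]
    linarith [mul_nonpos_of_nonneg_of_nonpos ht.le (hd i hi)]
  · have hopen : IsOpen {y : Fin n → ℝ | A i ⬝ᵥ y < b i} :=
      isOpen_lt (by fun_prop) continuous_const
    exact (eventually_add_smul_mem (hopen.mem_nhds (lt_of_le_of_ne (hx i) hi)) d).mono
      fun _ h => le_of_lt h

lemma exists_kkt_of_mem_projSet (hx : x ∈ projSet A z b) :
    ∃ E : Finset (Fin m), ↑E ⊆ activeIdx A b x ∧ LinearIndependent ℝ (fun i : E => A i.1) ∧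
      z - x ∈ coneOf A E := by
  classical
  obtain ⟨hxF, hVI⟩ := mem_projSet_iff.1 hx
  set I := Finset.univ.filter (· ∈ activeIdx A b x)
  have hI : z - x ∈ coneOf A I := mem_coneOf_of_forall_dotProduct_nonpos fun d hd => by
    obtain ⟨t, hmem, ht⟩ := ((eventually_add_smul_mem_feas hxF fun i hi =>
      hd i (by simpa [I] using hi)).and self_mem_nhdsWithin).exists
    have := hVI _ hmem
    rw [add_sub_cancel_left, dotProduct_smul, smul_eq_mul] at this
    exact nonpos_of_mul_nonpos_left (by linarith) ht
  obtain ⟨E, hE, hli, hzE⟩ := exists_linearIndependent_of_mem_coneOf hI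
  exact ⟨E, fun i hi => by simpa [I] using hE hi, hli, hzE⟩

end KKT

section Pieces

variable (A : Matrix (Fin m) (Fin n) ℝ) (D : Finset (Fin m))

/- For linearly independent rows `D`, `affineProj A D (z, b)` is the Euclidean projection of `z`
onto the affine subspace `{x | A_D x = b_D}`, and `affineMult A D (z, b)` is its Lagrange
multiplier: `z - affineProj A D (z, b) = A_Dᵀ (affineMult A D (z, b))`. -/
noncomputable def affineMult : (Fin n → ℝ) × (Fin m → ℝ) →ₗ[ℝ] D → ℝ :=
  ((subA A D) * (subA A D)ᵀ)⁻¹.mulVecLin ∘ₗ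
    ((subA A D).mulVecLin ∘ₗ LinearMap.fst ℝ _ _ -
      LinearMap.funLeft ℝ ℝ Subtype.val ∘ₗ LinearMap.snd ℝ _ _)

noncomputable def affineProj : (Fin n → ℝ) × (Fin m → ℝ) →ₗ[ℝ] Fin n → ℝ :=
  LinearMap.fst ℝ _ _ - (subA A D)ᵀ.mulVecLin ∘ₗ affineMult A D

def kktRegion : Set ((Fin n → ℝ) × (Fin m → ℝ)) :=
  {p | affineProj A D p ∈ Feas A p.2 ∧ 0 ≤ affineMult A D p}

variable {A D}

lemma affineMult_apply (p : (Fin n → ℝ) × (Fin m → ℝ)) :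
    affineMult A D p = ((subA A D) * (subA A D)ᵀ)⁻¹ *ᵥ ((subA A D) *ᵥ p.1 - restr p.2 D) :=
  rfl

lemma affineProj_apply (p : (Fin n → ℝ) × (Fin m → ℝ)) :
    affineProj A D p = p.1 - (subA A D)ᵀ *ᵥ affineMult A D p :=
  rfl

lemma affineProj_eq_projLipMat_mulVec (p : (Fin n → ℝ) × (Fin m → ℝ)) :
    affineProj A D p = projLipMat A D *ᵥ Sum.elim p.1 (restr p.2 D) := by
  simp only [affineProj_apply, affineMult_apply, projLipMat, fromCols_mulVec_sumElim, sub_mulVec,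
    one_mulVec, mulVec_sub, mulVec_mulVec, Matrix.mul_assoc]
  abel

lemma isUnit_gram (hli : LinearIndependent ℝ (fun i : D => A i.1)) :
    IsUnit ((subA A D) * (subA A D)ᵀ) := by
  simpa [conjTranspose_eq_transpose_of_trivial] using
    (PosDef.mul_conjTranspose_self _ ((vecMul_injective_iff (M := subA A D)).2 hli)).isUnit

lemma isClosed_kktRegion : IsClosed (kktRegion A D) := by
  have hsol : Continuous (affineProj A D) := LinearMap.continuous_of_finiteDimensional _
  have hmult : Continuous (affineMult A D) := LinearMap.continuous_of_finiteDimensional _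
  change IsClosed ({p | ∀ i, A i ⬝ᵥ affineProj A D p ≤ p.2 i} ∩ {p | 0 ≤ affineMult A D p})
  rw [ofPred_forall]
  exact (isClosed_iInter fun i => isClosed_le (by fun_prop) (by fun_prop)).inter
    (isClosed_le continuous_const hmult)

lemma subA_mulVec_affineProj (hli : LinearIndependent ℝ (fun i : D => A i.1))
    (p : (Fin n → ℝ) × (Fin m → ℝ)) :
    (subA A D) *ᵥ affineProj A D p = restr p.2 D := by
  rw [affineProj_apply, affineMult_apply, mulVec_sub, mulVec_mulVec, mulVec_mulVec,
    mul_nonsing_inv _ ((isUnit_gram hli).map detMonoidHom), one_mulVec, sub_sub_cancel]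

lemma eq_affineMult (hli : LinearIndependent ℝ (fun i : D => A i.1))
    {p : (Fin n → ℝ) × (Fin m → ℝ)} {μ : D → ℝ}
    (hμ : (subA A D) *ᵥ (p.1 - (subA A D)ᵀ *ᵥ μ) = restr p.2 D) : μ = affineMult A D p := by
  rw [affineMult_apply, ← hμ, mulVec_sub (subA A D) p.1, sub_sub_cancel, mulVec_mulVec,
    mulVec_mulVec, Matrix.mul_assoc, nonsing_inv_mul _ ((isUnit_gram hli).map detMonoidHom), one_mulVec]

lemma projSet_eq_singleton_of_mem_kktRegion (hli : LinearIndependent ℝ (fun i : D => A i.1))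
    {p : (Fin n → ℝ) × (Fin m → ℝ)} (hp : p ∈ kktRegion A D) :
    projSet A p.1 p.2 = {affineProj A D p} := by
  have hmem : affineProj A D p ∈ projSet A p.1 p.2 :=
    mem_projSet_of_kkt hp.1 (fun i hi => congrFun (subA_mulVec_affineProj hli p) ⟨i, hi⟩)
      (mem_coneOf_iff.2 ⟨_, hp.2, by rw [affineProj_apply, sub_sub_cancel]⟩)
  exact eq_singleton_iff_unique_mem.2 ⟨hmem, fun y hy => eq_of_mem_projSet hy hmem⟩

lemma mem_kktRegion_iff (hli : LinearIndependent ℝ (fun i : D => A i.1)) {z x : Fin n → ℝ}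
    {b : Fin m → ℝ} (hx : x ∈ projSet A z b) :
    (z, b) ∈ kktRegion A D ↔ D ∈ LprojKKT A z b x := by
  constructor
  · intro hp
    obtain rfl : x = affineProj A D (z, b) := by
      rwa [projSet_eq_singleton_of_mem_kktRegion hli hp] at hx
    exact ⟨fun i hi => congrFun (subA_mulVec_affineProj hli (z, b)) ⟨i, hi⟩, hli,
      mem_coneOf_iff.2 ⟨_, hp.2, by rw [affineProj_apply, sub_sub_cancel]⟩⟩
  · rintro ⟨hact, -, hcone⟩
    obtain ⟨μ, hμ, hzx⟩ := mem_coneOf_iff.1 hcone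
    have hx' : x = z - (subA A D)ᵀ *ᵥ μ := by rw [← hzx, sub_sub_cancel]
    have hμ' : μ = affineMult A D (z, b) :=
      eq_affineMult hli (by rw [← hx']; exact funext fun i => hact i.2)
    have hxp : affineProj A D (z, b) = x := by rw [affineProj_apply, ← hμ', hx']
    exact ⟨hxp ▸ hx.1, hμ' ▸ hμ⟩

end Pieces

section Local

lemma eventually_feas_nonempty {bb : Fin m → ℝ} (hSl : Slater A bb) :
    ∀ᶠ b in 𝓝 bb, (Feas A b).Nonempty := by
  obtain ⟨y, hy⟩ := hSl
  have hopen : IsOpen {b : Fin m → ℝ | ∀ i, A i ⬝ᵥ y < b i} := by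
    rw [ofPred_forall]
    exact isOpen_iInter_of_finite fun i => isOpen_lt continuous_const (continuous_apply i)
  filter_upwards [hopen.mem_nhds hy] with b hb using ⟨y, fun i => (hb i).le⟩

lemma eventually_exists_mem_kktRegion {zb xb : Fin n → ℝ} {bb : Fin m → ℝ}
    (hSl : Slater A bb) (hxb : xb ∈ projSet A zb bb) :
    ∀ᶠ p in 𝓝 (zb, bb), ∃ D ∈ LprojKKT A zb bb xb, p ∈ kktRegion A D := by
  have hfar : ∀ D : Finset (Fin m), ∀ᶠ p in 𝓝 (zb, bb),
      LinearIndependent ℝ (fun i : D => A i.1) → D ∉ LprojKKT A zb bb xb → p ∉ kktRegion A D := by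
    intro D
    by_cases h : LinearIndependent ℝ (fun i : D => A i.1) ∧ D ∉ LprojKKT A zb bb xb
    · filter_upwards [isClosed_kktRegion.isOpen_compl.mem_nhds
        fun hp => h.2 ((mem_kktRegion_iff h.1 hxb).1 hp)] with p hp using fun _ _ => hp
    · exact Eventually.of_forall fun _ hli hD => absurd ⟨hli, hD⟩ h
  filter_upwards [(continuous_snd.tendsto (zb, bb)).eventually (eventually_feas_nonempty hSl),
    eventually_all.2 hfar] with p hne hout
  obtain ⟨x, hx⟩ := projSet_nonempty (z := p.1) hne
  obtain ⟨E, hact, hli, hcone⟩ := exists_kkt_of_mem_projSet hx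
  have hE : p ∈ kktRegion A E := (mem_kktRegion_iff hli hx).2 ⟨hact, hli, hcone⟩
  exact ⟨E, by_contra fun h => hout E hli h hE, hE⟩

end Local

theorem norm_sub_le_of_piecewise_affine {E ι : Type*} [SeminormedAddCommGroup E]
    [NormedSpace ℝ E] (s : Finset ι) (C : ι → Set ℝ) (hC : ∀ i ∈ s, IsClosed (C i))
    (hcover : Icc (0 : ℝ) 1 ⊆ ⋃ i ∈ s, C i) (g : ℝ → E) (a v : ι → E)
    (hg : ∀ i ∈ s, ∀ t ∈ C i ∩ Icc 0 1, g t = a i + t • v i) {L : ℝ}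
    (hv : ∀ i ∈ s, ‖v i‖ ≤ L) : ‖g 1 - g 0‖ ≤ L := by
  set S := {t : ℝ | ‖g t - g 0‖ ≤ L * t}
  suffices Icc 0 1 ⊆ S by simpa [S] using this ⟨zero_le_one, le_rfl⟩
  have hS : S ∩ Icc 0 1 = ⋃ i ∈ s, C i ∩ Icc 0 1 ∩ {t | ‖a i + t • v i - g 0‖ ≤ L * t} := by
    ext t
    simp only [S, mem_inter_iff, mem_iUnion, mem_ofPred_eq, exists_prop]
    constructor
    · rintro ⟨ht, htI⟩
      obtain ⟨i, hi, htC⟩ := mem_iUnion₂.1 (hcover htI)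
      exact ⟨i, hi, ⟨htC, htI⟩, hg i hi t ⟨htC, htI⟩ ▸ ht⟩
    · rintro ⟨i, hi, htCI, ht⟩
      exact ⟨(hg i hi t htCI).symm ▸ ht, htCI.2⟩
  refine IsClosed.Icc_subset_of_forall_mem_nhdsWithin ?_ (by simp [S]) ?_
  · rw [hS]
    exact isClosed_biUnion_finset fun i hi =>
      ((hC i hi).inter isClosed_Icc).inter (isClosed_le (by fun_prop) (by fun_prop))
  rintro t ⟨htS, ht0, ht1⟩
  have hnear : ∀ᶠ t' in 𝓝 t, ∀ i ∈ s, t' ∈ C i → t ∈ C i := by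
    refine (Finset.eventually_all s).2 fun i hi => ?_
    by_cases htC : t ∈ C i
    · exact Eventually.of_forall fun _ _ => htC
    · filter_upwards [(hC i hi).isOpen_compl.mem_nhds htC] with t' ht' h using absurd h ht'
  filter_upwards [nhdsWithin_le_nhds hnear, Ioc_mem_nhdsGT ht1] with t' hnear' ht'
  have ht'I : t' ∈ Icc (0 : ℝ) 1 := ⟨ht0.trans ht'.1.le, ht'.2⟩
  obtain ⟨i, hi, ht'C⟩ := mem_iUnion₂.1 (hcover ht'I)
  have hstep : g t' - g t = (t' - t) • v i := by
    rw [hg i hi t' ⟨ht'C, ht'I⟩, hg i hi t ⟨hnear' i hi ht'C, ht0, ht1.le⟩, sub_smul]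
    abel
  calc ‖g t' - g 0‖ ≤ ‖g t' - g t‖ + ‖g t - g 0‖ := norm_sub_le_norm_sub_add_norm_sub _ _ _
    _ ≤ (t' - t) * L + L * t := by
      rw [hstep, norm_smul, Real.norm_of_nonneg (sub_nonneg.2 ht'.1.le)]
      exact add_le_add (mul_le_mul_of_nonneg_left (hv i hi) (sub_nonneg.2 ht'.1.le)) htS
    _ = L * t' := by ring

section OpNorm

variable {ι : Type} [Fintype ι] (B : Matrix (Fin n) (Fin n ⊕ ι) ℝ)

lemma bddAbove_opNormE_set : BddAbove {r | ∃ (α : Fin n → ℝ) (β : ι → ℝ), eucNorm α ≤ 1 ∧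
    ‖β‖ ≤ 1 ∧ r = eucNorm (B *ᵥ Sum.elim α β)} := by
  obtain ⟨C, hC⟩ := (isCompact_closedBall (0 : Fin n ⊕ ι → ℝ) 1).bddAbove_image
    (continuous_eucNorm.comp (LinearMap.continuous_of_finiteDimensional B.mulVecLin)).continuousOn
  refine ⟨C, ?_⟩
  rintro r ⟨α, β, hα, hβ, rfl⟩
  refine hC (mem_image_of_mem _ ?_)
  rw [mem_closedBall_zero_iff, pi_norm_le_iff_of_nonneg zero_le_one]
  rintro (i | i)
  · simpa using (abs_le_eucNorm α i).trans hα
  · exact (norm_le_pi_norm β i).trans hβ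

lemma eucNorm_mulVec_le_opNormE {α : Fin n → ℝ} {β : ι → ℝ} {c : ℝ} (hα : eucNorm α ≤ c)
    (hβ : ‖β‖ ≤ c) : eucNorm (B *ᵥ Sum.elim α β) ≤ opNormE B * c := by
  rcases ((eucNorm_nonneg α).trans hα).eq_or_lt with rfl | hc
  · obtain rfl : α = 0 := by simpa [eucNorm_eq_norm] using hα
    obtain rfl : β = 0 := norm_le_zero_iff.1 hβ
    simp [eucNorm]
  have hc' : 0 < c⁻¹ := inv_pos.2 hc
  have hmem : eucNorm (B *ᵥ Sum.elim (c⁻¹ • α) (c⁻¹ • β)) ≤ opNormE B := by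
    refine le_csSup (bddAbove_opNormE_set B) ⟨_, _, ?_, ?_, rfl⟩
    · rw [eucNorm_smul, abs_of_pos hc', inv_mul_le_iff₀ hc, mul_one]
      exact hα
    · rw [norm_smul, Real.norm_of_nonneg hc'.le, inv_mul_le_iff₀ hc, mul_one]
      exact hβ
  have helim : Sum.elim (c⁻¹ • α) (c⁻¹ • β) = c⁻¹ • Sum.elim α β := by ext (i | i) <;> rfl
  rwa [helim, mulVec_smul, eucNorm_smul, abs_of_pos hc', inv_mul_le_iff₀ hc,
    mul_comm] at hmem

lemma opNormE_nonneg : 0 ≤ opNormE B := by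
  simpa [eucNorm] using eucNorm_mulVec_le_opNormE B (α := 0) (β := 0) (c := 1)
    (by simp [eucNorm]) (by simp)

lemma opNormE_le {κ : ℝ}
    (h : ∀ α β, eucNorm α ≤ 1 → ‖β‖ ≤ 1 → eucNorm (B *ᵥ Sum.elim α β) ≤ κ) :
    opNormE B ≤ κ :=
  csSup_le ⟨_, 0, 0, by simp [eucNorm], by simp, rfl⟩ fun _ ⟨α, β, hα, hβ, hr⟩ =>
    hr ▸ h α β hα hβ

end OpNorm

section Upper

lemma pDistE_nonneg (p q : (Fin n → ℝ) × (Fin m → ℝ)) : 0 ≤ pDistE p q :=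
  (eucNorm_nonneg _).trans (le_max_left _ _)

lemma eucNorm_affineProj_sub_le (A : Matrix (Fin m) (Fin n) ℝ) (D : Finset (Fin m))
    (p q : (Fin n → ℝ) × (Fin m → ℝ)) :
    eucNorm (affineProj A D (p - q)) ≤ opNormE (projLipMat A D) * pDistE p q := by
  rw [affineProj_eq_projLipMat_mulVec]
  refine eucNorm_mulVec_le_opNormE _ (le_max_left _ _)
    ((pi_norm_le_iff_of_nonneg (pDistE_nonneg p q)).2 fun i => ?_)
  exact (norm_le_pi_norm (p.2 - q.2) i.1).trans (le_max_right _ _)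

/-- Along the segment `[p₁, p₂]` the projection is piecewise affine, the piece of `D` having
slope `affineProj A D (p₂ - p₁)`. -/
lemma eucNorm_sub_le_of_mem_projSet {W : Set ((Fin n → ℝ) × (Fin m → ℝ))} (hW : Convex ℝ W)
    {κ : ℝ} (hpiece : ∀ p ∈ W, ∃ D : Finset (Fin m), LinearIndependent ℝ (fun i : D => A i.1) ∧
      opNormE (projLipMat A D) ≤ κ ∧ p ∈ kktRegion A D)
    {p₁ p₂ : (Fin n → ℝ) × (Fin m → ℝ)} (hp₁ : p₁ ∈ W) (hp₂ : p₂ ∈ W) {x₁ x₂ : Fin n → ℝ}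
    (hx₁ : x₁ ∈ projSet A p₁.1 p₁.2) (hx₂ : x₂ ∈ projSet A p₂.1 p₂.2) :
    eucNorm (x₂ - x₁) ≤ κ * pDistE p₂ p₁ := by
  classical
  set q : ℝ → (Fin n → ℝ) × (Fin m → ℝ) := fun t => p₁ + t • (p₂ - p₁)
  set g : ℝ → Fin n → ℝ := fun t => Classical.epsilon (· ∈ projSet A (q t).1 (q t).2)
  have hg : ∀ t x, x ∈ projSet A (q t).1 (q t).2 → g t = x := fun t x hx =>
    eq_of_mem_projSet (Classical.epsilon_spec ⟨x, hx⟩) hx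
  set s := Finset.univ.filter fun D : Finset (Fin m) =>
    LinearIndependent ℝ (fun i : D => A i.1) ∧ opNormE (projLipMat A D) ≤ κ
  have hseg := norm_sub_le_of_piecewise_affine s (fun D => q ⁻¹' kktRegion A D)
    (fun D _ => isClosed_kktRegion.preimage (by fun_prop))
    (fun t ht => by
      obtain ⟨D, hli, hκ, hD⟩ := hpiece _ (hW.add_smul_sub_mem hp₁ hp₂ ht)
      exact mem_iUnion₂.2 ⟨D, by simp [s, hli, hκ], hD⟩)
    (fun t => WithLp.toLp 2 (g t)) (fun D => WithLp.toLp 2 (affineProj A D p₁))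
    (fun D => WithLp.toLp 2 (affineProj A D (p₂ - p₁)))
    (fun D hD t ⟨htD, _⟩ => by
      have hli := (Finset.mem_filter.1 hD).2.1
      rw [hg t (affineProj A D (q t)) (by rw [projSet_eq_singleton_of_mem_kktRegion hli htD]; rfl)]
      simp only [q, map_add, map_smul, WithLp.toLp_add, WithLp.toLp_smul])
    (fun D hD => by
      rw [← eucNorm_eq_norm]
      exact (eucNorm_affineProj_sub_le A D p₂ p₁).trans (mul_le_mul_of_nonneg_right
        (Finset.mem_filter.1 hD).2.2 (pDistE_nonneg _ _)))
  rwa [← WithLp.toLp_sub, ← eucNorm_eq_norm, hg 0 x₁ (by simpa [q] using hx₁),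
    hg 1 x₂ (by simpa [q] using hx₂)] at hseg

end Upper

lemma dSet_singleton (nrm : (Fin n → ℝ) → ℝ) (x a : Fin n → ℝ) :
    dSet nrm x {a} = ENNReal.ofReal (nrm (x - a)) := by
  simp [dSet]

section Lower

variable {D : Finset (Fin m)}

lemma eventually_mem_kktRegion (hli : LinearIndependent ℝ (fun i : D => A i.1))
    {p : (Fin n → ℝ) × (Fin m → ℝ)} (hfeas : ∀ i ∉ D, A i ⬝ᵥ affineProj A D p < p.2 i)
    (hmult : ∀ i, 0 < affineMult A D p i) : ∀ᶠ p' in 𝓝 p, p' ∈ kktRegion A D := by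
  have hsol : Continuous (affineProj A D) := LinearMap.continuous_of_finiteDimensional _
  have hmultc : Continuous (affineMult A D) := LinearMap.continuous_of_finiteDimensional _
  have h₁ : ∀ᶠ p' in 𝓝 p, ∀ i, i ∉ D → A i ⬝ᵥ affineProj A D p' < p'.2 i :=
    eventually_all.2 fun i => by
      by_cases hi : i ∈ D
      · exact Eventually.of_forall fun _ h => absurd hi h
      · have hc : Continuous fun p' : (Fin n → ℝ) × (Fin m → ℝ) => A i ⬝ᵥ affineProj A D p' := by
          fun_prop
        exact ((hc.tendsto p).eventually_lt ((continuous_apply i).comp continuous_snd).continuousAt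
          (hfeas i hi)).mono fun _ h _ => h
  have h₂ : ∀ᶠ p' in 𝓝 p, ∀ i, 0 < affineMult A D p' i :=
    eventually_all.2 fun i => tendsto_const_nhds.eventually_lt
      ((continuous_apply i).comp hmultc).continuousAt (hmult i)
  filter_upwards [h₁, h₂] with p' h₁ h₂
  refine ⟨fun i => ?_, fun i => (h₂ i).le⟩
  by_cases hi : i ∈ D
  · exact (congrFun (subA_mulVec_affineProj hli p') ⟨i, hi⟩).le
  · exact (h₁ i hi).le

lemma exists_nhds_mem_kktRegion {zb xb : Fin n → ℝ} {bb : Fin m → ℝ}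
    (hxb : xb ∈ projSet A zb bb) (hD : D ∈ LprojKKT A zb bb xb)
    {V : Set ((Fin n → ℝ) × (Fin m → ℝ))} (hV : V ∈ 𝓝 (zb, bb)) :
    ∃ p, V ∈ 𝓝 p ∧ affineProj A D p = xb ∧ ∀ᶠ p' in 𝓝 p, p' ∈ kktRegion A D := by
  have hli := hD.2.1
  have hR : (zb, bb) ∈ kktRegion A D := (mem_kktRegion_iff hli hxb).2 hD
  have hxb' : affineProj A D (zb, bb) = xb := by
    have h : xb ∈ projSet A (zb, bb).1 (zb, bb).2 := hxb
    rw [projSet_eq_singleton_of_mem_kktRegion hli hR] at h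
    exact h.symm
  -- moving along `dir` keeps the projection at `x̄` but raises the multipliers and the slacks
  -- of the constraints outside `D`, so all inequalities of the KKT region become strict
  set dir : (Fin n → ℝ) × (Fin m → ℝ) := ((subA A D)ᵀ *ᵥ 1, fun i => if i ∈ D then 0 else 1)
  have hdir_mult : affineMult A D dir = 1 := by
    have : restr dir.2 D = 0 := funext fun i => if_pos i.2
    rw [affineMult_apply, this, sub_zero, mulVec_mulVec, mulVec_mulVec, Matrix.mul_assoc,
      nonsing_inv_mul _ ((isUnit_gram hli).map detMonoidHom), one_mulVec]
  have hdir_proj : affineProj A D dir = 0 := by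
    rw [affineProj_apply, hdir_mult, sub_self]
  obtain ⟨s, hsV, hs⟩ :=
    ((eventually_add_smul_mem (interior_mem_nhds.2 hV) dir).and self_mem_nhdsWithin).exists
  have hproj : affineProj A D ((zb, bb) + s • dir) = xb := by simp [hdir_proj, hxb']
  refine ⟨_, mem_interior_iff_mem_nhds.1 hsV, hproj,
    eventually_mem_kktRegion hli (fun i hi => ?_) fun i => ?_⟩
  · rw [hproj]
    simpa [dir, hi] using (hxb.1 i).trans_lt (lt_add_of_pos_right (bb i) hs)
  · simpa [hdir_mult] using add_pos_of_nonneg_of_pos (hR.2 i) hs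

lemma opNormE_projLipMat_le_of_aubin {zb xb : Fin n → ℝ} {bb : Fin m → ℝ}
    (hxb : xb ∈ projSet A zb bb) (hD : D ∈ LprojKKT A zb bb xb) {κ : ℝ} (hκ : 0 ≤ κ)
    {V : Set ((Fin n → ℝ) × (Fin m → ℝ))} (hV : V ∈ 𝓝 (zb, bb)) {U : Set (Fin n → ℝ)}
    (hU : U ∈ 𝓝 xb)
    (hAubin : ∀ p₁ ∈ V, ∀ p₂ ∈ V, ∀ x₂ ∈ projSet A p₂.1 p₂.2 ∩ U,
      dSet eucNorm x₂ (projSet A p₁.1 p₁.2) ≤ ENNReal.ofReal (κ * pDistE p₂ p₁)) :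
    opNormE (projLipMat A D) ≤ κ := by
  have hli := hD.2.1
  obtain ⟨p₁, hV₁, hproj₁, hR₁⟩ := exists_nhds_mem_kktRegion hxb hD hV
  refine opNormE_le _ fun α β hα hβ => ?_
  set u := projLipMat A D *ᵥ Sum.elim α β
  set e : (Fin n → ℝ) × (Fin m → ℝ) := (α, fun i => if h : i ∈ D then β ⟨i, h⟩ else 0)
  have hproj₂ : ∀ t : ℝ, affineProj A D (p₁ + t • e) = xb + t • u := fun t => by
    have : Sum.elim e.1 (restr e.2 D) = Sum.elim α β := by
      ext (i | i) <;> simp [e, restr, i.2]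
    rw [map_add, map_smul, hproj₁, affineProj_eq_projLipMat_mulVec, this]
  obtain ⟨t, ⟨htV, htR, htU⟩, ht⟩ := (((eventually_add_smul_mem hV₁ e).and
    ((eventually_add_smul_mem hR₁ e).and (eventually_add_smul_mem hU u))).and
      self_mem_nhdsWithin).exists
  have key := hAubin p₁ (mem_of_mem_nhds hV₁) _ htV (xb + t • u)
    ⟨by rw [projSet_eq_singleton_of_mem_kktRegion hli htR, hproj₂]; rfl, htU⟩
  rw [projSet_eq_singleton_of_mem_kktRegion hli (mem_of_mem_nhds hR₁), hproj₁, dSet_singleton,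
    add_sub_cancel_left, eucNorm_smul, abs_of_pos ht,
    ENNReal.ofReal_le_ofReal_iff (mul_nonneg hκ (pDistE_nonneg _ _))] at key
  have hdist : pDistE (p₁ + t • e) p₁ ≤ t := by
    refine max_le ?_ ?_
    · simpa [eucNorm_smul, abs_of_pos ht] using mul_le_of_le_one_right ht.le hα
    · rw [Prod.snd_add, add_sub_cancel_left, Prod.smul_snd, norm_smul, Real.norm_of_nonneg ht.le]
      refine mul_le_of_le_one_right ht.le ((pi_norm_le_iff_of_nonneg zero_le_one).2 fun i => ?_)
      by_cases hi : i ∈ D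
      · simpa [e, hi] using (norm_le_pi_norm β ⟨i, hi⟩).trans hβ
      · simp [e, hi]
  exact le_of_mul_le_mul_left (key.trans (mul_le_mul_of_nonneg_left hdist hκ) |>.trans_eq
    (mul_comm _ _)) ht

end Lower

end MetricProjection

open MetricProjection

theorem statement19_general {n m : ℕ}
    (A : Matrix (Fin m) (Fin n) ℝ) (zb : Fin n → ℝ) (bb : Fin m → ℝ) (xb : Fin n → ℝ)
    (hSl : Slater A bb) (hxb : xb ∈ projSet A zb bb) :
    AubinAt eucNorm (fun p q => pDistE p q)
      (fun p : (Fin n → ℝ) × (Fin m → ℝ) => projSet A p.1 p.2) (zb, bb) xb ∧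
    (∀ D ∈ LprojKKT A zb bb xb, IsUnit ((subA A D) * (subA A D)ᵀ)) ∧
    lipMod eucNorm (fun p q => pDistE p q)
      (fun p : (Fin n → ℝ) × (Fin m → ℝ) => projSet A p.1 p.2) (zb, bb) xb =
      ⨆ D ∈ LprojKKT A zb bb xb, ENNReal.ofReal (opNormE (projLipMat A D)) := by
  obtain ⟨ε, hε, hball⟩ :=
    Metric.eventually_nhds_iff_ball.1 (eventually_exists_mem_kktRegion hSl hxb)
  obtain ⟨D₀, hD₀, -⟩ := hball _ (Metric.mem_ball_self hε)
  obtain ⟨Dmax, hDmax, hmax⟩ := (LprojKKT A zb bb xb).exists_max_image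
    (fun D => opNormE (projLipMat A D)) (toFinite _) ⟨D₀, hD₀⟩
  have hκ : 0 ≤ opNormE (projLipMat A Dmax) ∧ ∃ V ∈ 𝓝 (zb, bb), ∃ U ∈ 𝓝 xb,
      ∀ p₁ ∈ V, ∀ p₂ ∈ V, ∀ x₂ ∈ projSet A p₂.1 p₂.2 ∩ U, dSet eucNorm x₂ (projSet A p₁.1 p₁.2) ≤
        ENNReal.ofReal (opNormE (projLipMat A Dmax) * pDistE p₂ p₁) := by
    refine ⟨opNormE_nonneg _, _, Metric.ball_mem_nhds _ hε, univ, univ_mem,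
      fun p₁ hp₁ p₂ hp₂ x₂ hx₂ => ?_⟩
    obtain ⟨D, hD, hp₁D⟩ := hball p₁ hp₁
    rw [projSet_eq_singleton_of_mem_kktRegion hD.2.1 hp₁D, dSet_singleton]
    refine ENNReal.ofReal_le_ofReal (eucNorm_sub_le_of_mem_projSet (convex_ball _ _)
      (fun p hp => ?_) hp₁ hp₂ ?_ hx₂.1)
    · obtain ⟨D', hD', hpD'⟩ := hball p hp
      exact ⟨D', hD'.2.1, hmax D' hD', hpD'⟩
    · rw [projSet_eq_singleton_of_mem_kktRegion hD.2.1 hp₁D]; rfl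
  refine ⟨⟨_, hκ⟩, fun D hD => isUnit_gram hD.2.1, le_antisymm ?_ ?_⟩
  · exact iInf₂_le_of_le _ hκ (le_iSup₂_of_le Dmax hDmax le_rfl)
  · exact le_iInf₂ fun κ ⟨hκ0, V, hV, U, hU, hAubin⟩ => iSup₂_le fun D hD =>
      ENNReal.ofReal_le_ofReal (opNormE_projLipMat_le_of_aubin hxb hD hκ0 hV hU hAubin)

/-- under SCQ at `b̄`, the metric projection `P` has the Aubin property at
`((z̄,b̄),x̄)`, each `A_D A_Dᵀ`, `D ∈ L_{z̄,b̄}(x̄)`, is invertible, and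
`lip P((z̄,b̄),x̄)` equals the maximum over `D ∈ L_{z̄,b̄}(x̄)` of
`‖(I_n − A_Dᵀ(A_D A_Dᵀ)⁻¹A_D | A_Dᵀ(A_D A_Dᵀ)⁻¹)‖`. -/
theorem statement19 {n m : ℕ} (hn : 0 < n) (hm : 0 < m)
    (A : Matrix (Fin m) (Fin n) ℝ) (zb : Fin n → ℝ) (bb : Fin m → ℝ) (xb : Fin n → ℝ)
    (hSl : Slater A bb) (hxb : xb ∈ projSet A zb bb) :
    AubinAt eucNorm (fun p q => pDistE p q)
      (fun p : (Fin n → ℝ) × (Fin m → ℝ) => projSet A p.1 p.2) (zb, bb) xb ∧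
    (∀ D ∈ LprojKKT A zb bb xb, IsUnit ((subA A D) * (subA A D)ᵀ)) ∧
    lipMod eucNorm (fun p q => pDistE p q)
      (fun p : (Fin n → ℝ) × (Fin m → ℝ) => projSet A p.1 p.2) (zb, bb) xb =
      ⨆ D ∈ LprojKKT A zb bb xb, ENNReal.ofReal (opNormE (projLipMat A D)) :=
  statement19_general A zb bb xb hSl hxb
end
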